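/- Let E be a finite-dimensional real inner product space, let t₀ > 0, and let X, Y : ℝ × E → E be continuously differentiable time-dependent vector fields. Let u : [0,1] × [0,t₀] → E be a smooth map such that ∂_t u(s,t) = (1−s)·X(t, u(s,t)) + s·Y(t, u(s,t)) for all (s,t) ∈ [0,1] × [0,t₀]. Suppose K ≥ 0 satisfies ‖Y(t, p) − X(t, p)‖ ≤ K for all t ∈ ℝ and all p in the image of u, and suppose M ≥ 0 satisfies ‖D_p X(t, p)‖ ≤ M and ‖D_p Y(t, p)‖ ≤ M (operator norms of the spatial derivatives) for all t ∈ ℝ and all p in the image of u. Then for every t ∈ [0,t₀], ‖u(0,t) − u(1,t)‖ ≤ √(∫₀¹ ‖∂_s u(s,0)‖² ds + t·K²) · exp(t·(M + 1/2)). -/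

import Mathlib

open Set

/-- Auxiliary bound on `gronwallBound`. -/
lemma gronwallBound_le_aux {δ M K t : ℝ} (hM : 0 ≤ M) (hK : 0 ≤ K)
    (ht : 0 ≤ t) : gronwallBound δ M K t ≤ (δ + K * t) * Real.exp (M * t) := by
  rcases eq_or_lt_of_le hM with h0 | h0
  · rw [← h0]
    rw [gronwallBound_K0]
    simp only [zero_mul, Real.exp_zero, mul_one]
    norm_num
  · rw [gronwallBound_of_K_ne_0 (ne_of_gt h0)]
    set x := M * t with hx
    have hx0 : 0 ≤ x := mul_nonneg h0.le ht
    have h1 : (1 - x) * Real.exp x ≤ Real.exp (-x) * Real.exp x := by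
      apply mul_le_mul_of_nonneg_right _ (Real.exp_pos x).le
      linarith [Real.add_one_le_exp (-x)]
    have h2 : Real.exp (-x) * Real.exp x = 1 := by
      rw [← Real.exp_add]; simp
    have hkey : Real.exp x - 1 ≤ x * Real.exp x := by nlinarith
    have hdiv : K / M * (x * Real.exp x) = K * t * Real.exp x := by
      rw [hx]; field_simp
    have h3 : K / M * (Real.exp x - 1) ≤ K * t * Real.exp x := by
      rw [← hdiv]
      exact mul_le_mul_of_nonneg_left hkey (div_nonneg hK h0.le)
    have : (δ + K * t) * Real.exp x = δ * Real.exp x + K * t * Real.exp x := by ring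
    rw [this]
    linarith

/-- Grönwall-type comparison of the flows of two time-dependent vector
fields through the linearly interpolated family, in a finite-dimensional real inner
product space. -/
theorem stmt4 (E : Type*) [NormedAddCommGroup E] [InnerProductSpace ℝ E]
    [FiniteDimensional ℝ E]
    (t₀ : ℝ) (ht₀ : 0 < t₀)
    (X Y : ℝ → E → E)
    (hX : ContDiff ℝ 1 (fun q : ℝ × E => X q.1 q.2))
    (hY : ContDiff ℝ 1 (fun q : ℝ × E => Y q.1 q.2))
    (u : ℝ × ℝ → E) (hu : ContDiff ℝ (⊤ : ℕ∞) u)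
    (hflow : ∀ s ∈ Icc (0:ℝ) 1, ∀ t ∈ Icc (0:ℝ) t₀,
      HasDerivAt (fun τ => u (s, τ))
        ((1 - s) • X t (u (s, t)) + s • Y t (u (s, t))) t)
    (K : ℝ) (hK : 0 ≤ K)
    (hKbd : ∀ t : ℝ, ∀ p ∈ u '' (Icc (0:ℝ) 1 ×ˢ Icc (0:ℝ) t₀),
      ‖Y t p - X t p‖ ≤ K)
    (M : ℝ) (hM : 0 ≤ M)
    (hMX : ∀ t : ℝ, ∀ p ∈ u '' (Icc (0:ℝ) 1 ×ˢ Icc (0:ℝ) t₀),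
      ‖fderiv ℝ (X t) p‖ ≤ M)
    (hMY : ∀ t : ℝ, ∀ p ∈ u '' (Icc (0:ℝ) 1 ×ˢ Icc (0:ℝ) t₀),
      ‖fderiv ℝ (Y t) p‖ ≤ M) :
    ∀ t ∈ Icc (0:ℝ) t₀,
      ‖u (0, t) - u (1, t)‖ ≤
        Real.sqrt ((∫ s in (0:ℝ)..1, ‖deriv (fun σ => u (σ, 0)) s‖ ^ 2) + t * K ^ 2) *
          Real.exp (t * (M + 1 / 2)) := by
  intro t ht
  have hud : Differentiable ℝ u := hu.differentiable (by simp)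
  have hfd : ContDiff ℝ (⊤ : ℕ∞) (fderiv ℝ u) := hu.fderiv_right (by simp)
  have hfdd : Differentiable ℝ (fderiv ℝ u) := hfd.differentiable (by simp)
  -- the s-derivative of u
  set F : ℝ × ℝ → E := fun p => fderiv ℝ u p (1, 0) with hFdef
  have hFc : Continuous F := (hfd.clm_apply contDiff_const).continuous
  have hs_deriv : ∀ (s τ : ℝ), HasDerivAt (fun σ => u (σ, τ)) (F (s, τ)) s := by
    intro s τ
    exact (hud (s, τ)).hasFDerivAt.comp_hasDerivAt s
      ((hasDerivAt_id s).prodMk (hasDerivAt_const s τ))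
  have ht_deriv : ∀ (s τ : ℝ), HasDerivAt (fun τ' => u (s, τ')) (fderiv ℝ u (s, τ) (0, 1)) τ := by
    intro s τ
    exact (hud (s, τ)).hasFDerivAt.comp_hasDerivAt τ
      ((hasDerivAt_const τ s).prodMk (hasDerivAt_id τ))
  have hid : ∀ s ∈ Icc (0:ℝ) 1, ∀ τ ∈ Icc (0:ℝ) t₀,
      fderiv ℝ u (s, τ) (0, 1) = (1 - s) • X τ (u (s, τ)) + s • Y τ (u (s, τ)) :=
    fun s hs τ hτ => (ht_deriv s τ).unique (hflow s hs τ hτ)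
  have hXd : ∀ τ : ℝ, Differentiable ℝ (X τ) := by
    intro τ p
    exact ((hX.differentiable one_ne_zero) (τ, p)).comp p
      ((differentiableAt_const τ).prodMk differentiableAt_id)
  have hYd : ∀ τ : ℝ, Differentiable ℝ (Y τ) := by
    intro τ p
    exact ((hY.differentiable one_ne_zero) (τ, p)).comp p
      ((differentiableAt_const τ).prodMk differentiableAt_id)
  -- mixed partials: the t-derivative of F
  have key : ∀ s ∈ Ioo (0:ℝ) 1, ∀ τ ∈ Icc (0:ℝ) t₀,
      HasDerivAt (fun τ' => F (s, τ'))
        ((Y τ (u (s, τ)) - X τ (u (s, τ))) +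
          ((1 - s) • (fderiv ℝ (X τ) (u (s, τ)) (F (s, τ))) +
            s • (fderiv ℝ (Y τ) (u (s, τ)) (F (s, τ))))) τ := by
    intro s hs τ hτ
    have hf'' : HasFDerivAt (fderiv ℝ u) (fderiv ℝ (fderiv ℝ u) (s, τ)) (s, τ) :=
      (hfdd (s, τ)).hasFDerivAt
    set f'' := fderiv ℝ (fderiv ℝ u) (s, τ) with hf''def
    have hsymm : f'' (1, 0) (0, 1) = f'' (0, 1) (1, 0) :=
      second_derivative_symmetric (fun y => (hud y).hasFDerivAt) hf'' (1, 0) (0, 1)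
    -- derivative of τ' ↦ F (s, τ')
    have hFt : HasDerivAt (fun τ' => F (s, τ')) (f'' (0, 1) (1, 0)) τ := by
      have h1 : HasFDerivAt F ((ContinuousLinearMap.apply ℝ E ((1:ℝ), (0:ℝ))).comp f'') (s, τ) :=
        (ContinuousLinearMap.apply ℝ E ((1:ℝ), (0:ℝ))).hasFDerivAt.comp (s, τ) hf''
      have h2 := h1.comp_hasDerivAt τ ((hasDerivAt_const τ s).prodMk (hasDerivAt_id τ))
      exact h2
    -- derivative of σ ↦ fderiv u (σ, τ) (0,1)
    have hGs : HasDerivAt (fun σ => fderiv ℝ u (σ, τ) (0, 1)) (f'' (1, 0) (0, 1)) s := by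
      have h1 : HasFDerivAt (fun q => fderiv ℝ u q ((0:ℝ), (1:ℝ)))
          ((ContinuousLinearMap.apply ℝ E ((0:ℝ), (1:ℝ))).comp f'') (s, τ) :=
        (ContinuousLinearMap.apply ℝ E ((0:ℝ), (1:ℝ))).hasFDerivAt.comp (s, τ) hf''
      have h2 := h1.comp_hasDerivAt s ((hasDerivAt_id s).prodMk (hasDerivAt_const s τ))
      exact h2
    -- derivative of the interpolated field along u
    have hXu : HasDerivAt (fun σ => X τ (u (σ, τ)))
        (fderiv ℝ (X τ) (u (s, τ)) (F (s, τ))) s :=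
      (hXd τ (u (s, τ))).hasFDerivAt.comp_hasDerivAt s (hs_deriv s τ)
    have hYu : HasDerivAt (fun σ => Y τ (u (σ, τ)))
        (fderiv ℝ (Y τ) (u (s, τ)) (F (s, τ))) s :=
      (hYd τ (u (s, τ))).hasFDerivAt.comp_hasDerivAt s (hs_deriv s τ)
    have hc1 : HasDerivAt (fun σ : ℝ => 1 - σ) (-1) s := by
      simpa using (hasDerivAt_id s).const_sub 1
    have hW : HasDerivAt (fun σ => (1 - σ) • X τ (u (σ, τ)) + σ • Y τ (u (σ, τ)))
        (((1 - s) • (fderiv ℝ (X τ) (u (s, τ)) (F (s, τ))) + (-1 : ℝ) • X τ (u (s, τ))) +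
          (s • (fderiv ℝ (Y τ) (u (s, τ)) (F (s, τ))) + (1 : ℝ) • Y τ (u (s, τ)))) s :=
      (hc1.smul hXu).add ((hasDerivAt_id s).smul hYu)
    have hmem : Ioo (0:ℝ) 1 ∈ nhds s := isOpen_Ioo.mem_nhds hs
    have heq : (fun σ => fderiv ℝ u (σ, τ) (0, 1)) =ᶠ[nhds s]
        (fun σ => (1 - σ) • X τ (u (σ, τ)) + σ • Y τ (u (σ, τ))) := by
      filter_upwards [hmem] with σ hσ
      exact hid σ (Ioo_subset_Icc_self hσ) τ hτ
    have hGs' := hW.congr_of_eventuallyEq heq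
    have huniq := hGs.unique hGs'
    have hval : ((1 - s) • (fderiv ℝ (X τ) (u (s, τ)) (F (s, τ))) + (-1 : ℝ) • X τ (u (s, τ))) +
          (s • (fderiv ℝ (Y τ) (u (s, τ)) (F (s, τ))) + (1 : ℝ) • Y τ (u (s, τ))) =
        (Y τ (u (s, τ)) - X τ (u (s, τ))) +
          ((1 - s) • (fderiv ℝ (X τ) (u (s, τ)) (F (s, τ))) +
            s • (fderiv ℝ (Y τ) (u (s, τ)) (F (s, τ)))) := by
      module
    rw [← hsymm, huniq, hval] at hFt
    exact hFt
  -- Grönwall along each interior line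
  have ht0 : 0 ≤ t := ht.1
  have hptwise : ∀ s ∈ Ioo (0:ℝ) 1,
      ‖F (s, t)‖ ≤ (‖F (s, 0)‖ + K * t) * Real.exp (M * t) := by
    intro s hs
    have hcont : ContinuousOn (fun τ => F (s, τ)) (Icc 0 t₀) :=
      (hFc.comp (continuous_const.prodMk continuous_id)).continuousOn
    have hgron := norm_le_gronwallBound_of_norm_deriv_right_le (δ := ‖F (s, 0)‖) (K := M)
      (ε := K) (a := 0) (b := t₀) hcont
      (fun τ hτ => (key s hs τ ⟨hτ.1, hτ.2.le⟩).hasDerivWithinAt)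
      le_rfl
      (by
        intro τ hτ
        have hmem : u (s, τ) ∈ u '' (Icc (0:ℝ) 1 ×ˢ Icc (0:ℝ) t₀) :=
          ⟨(s, τ), ⟨Ioo_subset_Icc_self hs, hτ.1, hτ.2.le⟩, rfl⟩
        have hDX : ‖fderiv ℝ (X τ) (u (s, τ)) (F (s, τ))‖ ≤ M * ‖F (s, τ)‖ :=
          le_trans ((fderiv ℝ (X τ) (u (s, τ))).le_opNorm (F (s, τ)))
            (mul_le_mul_of_nonneg_right (hMX τ _ hmem) (norm_nonneg _))
        have hDY : ‖fderiv ℝ (Y τ) (u (s, τ)) (F (s, τ))‖ ≤ M * ‖F (s, τ)‖ :=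
          le_trans ((fderiv ℝ (Y τ) (u (s, τ))).le_opNorm (F (s, τ)))
            (mul_le_mul_of_nonneg_right (hMY τ _ hmem) (norm_nonneg _))
        have h1 : ‖Y τ (u (s, τ)) - X τ (u (s, τ))‖ ≤ K := hKbd τ _ hmem
        have h2 : ‖(1 - s) • (fderiv ℝ (X τ) (u (s, τ)) (F (s, τ)))‖ ≤
            (1 - s) * (M * ‖F (s, τ)‖) := by
          rw [norm_smul, Real.norm_eq_abs, abs_of_nonneg (by linarith [hs.2])]
          exact mul_le_mul_of_nonneg_left hDX (by linarith [hs.2])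
        have h3 : ‖s • (fderiv ℝ (Y τ) (u (s, τ)) (F (s, τ)))‖ ≤
            s * (M * ‖F (s, τ)‖) := by
          rw [norm_smul, Real.norm_eq_abs, abs_of_nonneg hs.1.le]
          exact mul_le_mul_of_nonneg_left hDY hs.1.le
        calc ‖(Y τ (u (s, τ)) - X τ (u (s, τ))) +
              ((1 - s) • (fderiv ℝ (X τ) (u (s, τ)) (F (s, τ))) +
                s • (fderiv ℝ (Y τ) (u (s, τ)) (F (s, τ))))‖
            ≤ ‖Y τ (u (s, τ)) - X τ (u (s, τ))‖ +
              (‖(1 - s) • (fderiv ℝ (X τ) (u (s, τ)) (F (s, τ)))‖ +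
                ‖s • (fderiv ℝ (Y τ) (u (s, τ)) (F (s, τ)))‖) :=
              (norm_add_le _ _).trans (by gcongr; exact norm_add_le _ _)
          _ ≤ M * ‖F (s, τ)‖ + K := by nlinarith [norm_nonneg (F (s, τ))])
      t ⟨ht0, ht.2⟩
    calc ‖F (s, t)‖ ≤ gronwallBound ‖F (s, 0)‖ M K (t - 0) := hgron
      _ ≤ (‖F (s, 0)‖ + K * t) * Real.exp (M * t) := by
          rw [sub_zero]; exact gronwallBound_le_aux hM hK ht0
  -- continuity of slices of F
  have hFt_cont : ∀ c : ℝ, Continuous (fun s => F (s, c)) := fun c =>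
    hFc.comp (continuous_id.prodMk continuous_const)
  -- fundamental theorem of calculus in s
  have hint1 : IntervalIntegrable (fun s => F (s, t)) MeasureTheory.volume 0 1 :=
    (hFt_cont t).intervalIntegrable 0 1
  have hsub : ∫ s in (0:ℝ)..1, F (s, t) = u (1, t) - u (0, t) :=
    intervalIntegral.integral_eq_sub_of_hasDerivAt (fun s _ => hs_deriv s t) hint1
  have h_eq : ‖u (0, t) - u (1, t)‖ = ‖∫ s in (0:ℝ)..1, F (s, t)‖ := by
    rw [hsub, norm_sub_rev]
  have hnrm : ‖∫ s in (0:ℝ)..1, F (s, t)‖ ≤ ∫ s in (0:ℝ)..1, ‖F (s, t)‖ :=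
    intervalIntegral.norm_integral_le_integral_norm zero_le_one
  have hint2 : IntervalIntegrable (fun s => ‖F (s, t)‖) MeasureTheory.volume 0 1 :=
    ((hFt_cont t).norm).intervalIntegrable 0 1
  have hint3 : IntervalIntegrable (fun s => (‖F (s, 0)‖ + K * t) * Real.exp (M * t))
      MeasureTheory.volume 0 1 :=
    (((hFt_cont 0).norm.add continuous_const).mul continuous_const).intervalIntegrable 0 1
  have hmono : ∫ s in (0:ℝ)..1, ‖F (s, t)‖ ≤
      ∫ s in (0:ℝ)..1, (‖F (s, 0)‖ + K * t) * Real.exp (M * t) := by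
    apply intervalIntegral.integral_mono_ae_restrict zero_le_one hint2 hint3
    rw [← MeasureTheory.Measure.restrict_congr_set MeasureTheory.Ioo_ae_eq_Icc]
    refine (MeasureTheory.ae_restrict_iff' measurableSet_Ioo).2
      (Filter.Eventually.of_forall ?_)
    intro s hs
    exact hptwise s hs
  set I1 : ℝ := ∫ s in (0:ℝ)..1, ‖F (s, 0)‖ with hI1def
  set E0 : ℝ := ∫ s in (0:ℝ)..1, ‖F (s, 0)‖ ^ 2 with hE0def
  have hintn : IntervalIntegrable (fun s => ‖F (s, 0)‖) MeasureTheory.volume 0 1 :=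
    ((hFt_cont 0).norm).intervalIntegrable 0 1
  have hintsq : IntervalIntegrable (fun s => ‖F (s, 0)‖ ^ 2) MeasureTheory.volume 0 1 :=
    ((hFt_cont 0).norm.pow 2).intervalIntegrable 0 1
  have hlin : ∫ s in (0:ℝ)..1, (‖F (s, 0)‖ + K * t) * Real.exp (M * t) =
      (I1 + K * t) * Real.exp (M * t) := by
    rw [intervalIntegral.integral_mul_const,
      intervalIntegral.integral_add hintn intervalIntegrable_const]
    simp [hI1def]
  have hI1nn : 0 ≤ I1 :=
    intervalIntegral.integral_nonneg zero_le_one (fun s _ => norm_nonneg _)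
  have hE0nn : 0 ≤ E0 :=
    intervalIntegral.integral_nonneg zero_le_one (fun s _ => sq_nonneg _)
  -- Cauchy-Schwarz
  have hcs : I1 ^ 2 ≤ E0 := by
    have h0 : 0 ≤ ∫ s in (0:ℝ)..1, (‖F (s, 0)‖ - I1) ^ 2 :=
      intervalIntegral.integral_nonneg zero_le_one (fun s _ => sq_nonneg _)
    have hexp : ∫ s in (0:ℝ)..1, (‖F (s, 0)‖ - I1) ^ 2 = E0 - I1 ^ 2 := by
      have e1 : (fun s => (‖F (s, 0)‖ - I1) ^ 2) =
          fun s => ‖F (s, 0)‖ ^ 2 - (2 * I1) * ‖F (s, 0)‖ + I1 ^ 2 :=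
        funext fun s => by ring
      rw [e1, intervalIntegral.integral_add (hintsq.sub (hintn.const_mul _))
        intervalIntegrable_const,
        intervalIntegral.integral_sub hintsq (hintn.const_mul _),
        intervalIntegral.integral_const_mul]
      simp only [intervalIntegral.integral_const, sub_zero, one_smul, smul_eq_mul]
      rw [← hI1def, ← hE0def]
      ring
    linarith [hexp ▸ h0]
  have hI1sqrt : I1 ≤ Real.sqrt E0 := (Real.le_sqrt hI1nn hE0nn).2 hcs
  -- rewrite the goal's integral
  have hE0goal : (∫ s in (0:ℝ)..1, ‖deriv (fun σ => u (σ, 0)) s‖ ^ 2) = E0 := by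
    rw [hE0def]
    apply intervalIntegral.integral_congr
    intro s _
    simp only [(hs_deriv s 0).deriv]
  rw [hE0goal]
  -- final algebraic estimate
  have hsq : (Real.sqrt E0 + K * t) ^ 2 ≤ (E0 + t * K ^ 2) * Real.exp t := by
    have h1 : Real.sqrt E0 ^ 2 = E0 := Real.sq_sqrt hE0nn
    have h2 : 2 * Real.sqrt E0 * K ≤ E0 + K ^ 2 := by
      nlinarith [two_mul_le_add_sq (Real.sqrt E0) K]
    have h2' : t * (2 * Real.sqrt E0 * K) ≤ t * (E0 + K ^ 2) :=
      mul_le_mul_of_nonneg_left h2 ht0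
    have h3 : (E0 + t * K ^ 2) * (t + 1) ≤ (E0 + t * K ^ 2) * Real.exp t :=
      mul_le_mul_of_nonneg_left (Real.add_one_le_exp t)
        (add_nonneg hE0nn (mul_nonneg ht0 (sq_nonneg K)))
    nlinarith
  have hEnn : 0 ≤ E0 + t * K ^ 2 := add_nonneg hE0nn (mul_nonneg ht0 (sq_nonneg K))
  have hann : 0 ≤ Real.sqrt E0 + K * t :=
    add_nonneg (Real.sqrt_nonneg _) (mul_nonneg hK ht0)
  have hstep : Real.sqrt E0 + K * t ≤ Real.sqrt (E0 + t * K ^ 2) * Real.exp (t / 2) := by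
    have h4 := Real.sqrt_le_sqrt hsq
    rw [Real.sqrt_sq hann, Real.sqrt_mul hEnn, ← Real.exp_half] at h4
    exact h4
  have hexpnn : (0:ℝ) ≤ Real.exp (M * t) := (Real.exp_pos _).le
  have hfin : Real.sqrt (E0 + t * K ^ 2) * Real.exp (t / 2) * Real.exp (M * t) =
      Real.sqrt (E0 + t * K ^ 2) * Real.exp (t * (M + 1 / 2)) := by
    rw [mul_assoc, ← Real.exp_add]
    ring_nf
  calc ‖u (0, t) - u (1, t)‖ = ‖∫ s in (0:ℝ)..1, F (s, t)‖ := h_eq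
    _ ≤ ∫ s in (0:ℝ)..1, ‖F (s, t)‖ := hnrm
    _ ≤ (I1 + K * t) * Real.exp (M * t) := by rw [← hlin]; exact hmono
    _ ≤ (Real.sqrt E0 + K * t) * Real.exp (M * t) := by
        apply mul_le_mul_of_nonneg_right _ hexpnn
        linarith
    _ ≤ Real.sqrt (E0 + t * K ^ 2) * Real.exp (t / 2) * Real.exp (M * t) :=
        mul_le_mul_of_nonneg_right hstep hexpnn
    _ = Real.sqrt (E0 + t * K ^ 2) * Real.exp (t * (M + 1 / 2)) := hfin
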